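/- Assume μ1, μ2 ∈ ℝ, σ1, σ2 > 0 and ρ ∈ (−1,1), and let f be the bivariate normal density with these parameters. Let φ(z) := (2π)^{−1/2}·exp(−z²/2), Φ(z) := ∫_{−∞}^z φ(u) du, and δ_ρ := sign(ρ). Then the probability of the open first quadrant satisfies: ∫₀^∞∫₀^∞ f(s1,s2) ds1 ds2 = 1 − ∫_{−∞}^∞ Φ((√|ρ|·z − μ1/σ1)/√(1−|ρ|))·φ(z) dz − ∫_{−∞}^∞ Φ((δ_ρ·√|ρ|·z − μ2/σ2)/√(1−|ρ|))·φ(z) dz + ∫_{−∞}^∞ Φ((√|ρ|·z − μ1/σ1)/√(1−|ρ|))·Φ((δ_ρ·√|ρ|·z − μ2/σ2)/√(1−|ρ|))·φ(z) dz. -/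

import Mathlib

/-!
Standardizing and conditioning on the second coordinate turn the quadrant probability into
`∫_{u > -β} Φ((ρ u + α) / √(1 - ρ²)) φ(u) du` with `α = μ1 / σ1`, `β = μ2 / σ2`; by
inclusion–exclusion this is `1 - Φ(-α) - Φ(-β) + P(X ≤ -α, Y ≤ -β)` for a standard bivariate
normal pair `(X, Y)` with correlation `ρ`. With `a = √|ρ|`, `k = sign ρ · √|ρ|`, `s = √(1 - |ρ|)`
one has `ρ = a k` and `a² + s² = k² + s² = 1`, so `X = a Z + s E₁`, `Y = k Z + s E₂` with
independent standard normals `Z, E₁, E₂` has that law, and conditioning on `Z` gives the three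
integrals over `z`. Analytically, everything rests on the rotation invariance of `φ ⊗ φ`: for
`k² + s² = 1`, `φ(z) φ((u + k z) / s) = φ(u) φ((z + k u) / s)`.
-/

open Real MeasureTheory Set

/-- The bivariate normal density with means `μ1, μ2`, standard deviations `σ1, σ2`
and correlation `ρ`. -/
noncomputable def bvnDensity (μ1 μ2 σ1 σ2 ρ : ℝ) (s1 s2 : ℝ) : ℝ :=
  (2 * π * σ1 * σ2 * Real.sqrt (1 - ρ ^ 2))⁻¹ *
    Real.exp (-(1 / 2) * (((s2 - μ2) / σ2) ^ 2 +
      (s1 - μ1 - ρ * (σ1 / σ2) * (s2 - μ2)) ^ 2 / (σ1 ^ 2 * (1 - ρ ^ 2))))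

/-- The standard normal density `φ`. -/
noncomputable def stdPhi (z : ℝ) : ℝ := (2 * π) ^ (-(1 / 2) : ℝ) * Real.exp (-z ^ 2 / 2)

/-- The standard normal distribution function `Φ`. -/
noncomputable def stdPhiCdf (z : ℝ) : ℝ := ∫ u in Set.Iic z, stdPhi u

open ProbabilityTheory

lemma stdPhi_eq_gaussianPDFReal : stdPhi = gaussianPDFReal 0 1 := by
  ext z
  rw [stdPhi, gaussianPDFReal, Real.rpow_neg (by positivity), ← Real.sqrt_eq_rpow]
  simp

lemma stdPhi_nonneg (z : ℝ) : 0 ≤ stdPhi z :=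
  stdPhi_eq_gaussianPDFReal ▸ gaussianPDFReal_nonneg 0 1 z

lemma integrable_stdPhi : Integrable stdPhi :=
  stdPhi_eq_gaussianPDFReal ▸ integrable_gaussianPDFReal 0 1

lemma integral_stdPhi : ∫ z, stdPhi z = 1 :=
  stdPhi_eq_gaussianPDFReal ▸ integral_gaussianPDFReal_eq_one 0 one_ne_zero

lemma stdPhi_neg (z : ℝ) : stdPhi (-z) = stdPhi z := by
  rw [stdPhi, stdPhi, neg_sq]

lemma stdPhi_mul_stdPhi {p q r t : ℝ} (h : p ^ 2 + q ^ 2 = r ^ 2 + t ^ 2) :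
    stdPhi p * stdPhi q = stdPhi r * stdPhi t := by
  simp only [stdPhi]
  rw [mul_mul_mul_comm, ← Real.exp_add, mul_mul_mul_comm, ← Real.exp_add]
  congr 2
  linarith

lemma monotone_stdPhiCdf : Monotone stdPhiCdf := fun _ _ hxy =>
  setIntegral_mono_set integrable_stdPhi.integrableOn (ae_of_all _ stdPhi_nonneg)
    (Iic_subset_Iic.2 hxy).eventuallyLE

lemma measurable_stdPhiCdf : Measurable stdPhiCdf := monotone_stdPhiCdf.measurable

lemma stdPhiCdf_add_integral_Ioi (b : ℝ) : stdPhiCdf b + ∫ z in Ioi b, stdPhi z = 1 := by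
  rw [stdPhiCdf, intervalIntegral.integral_Iic_add_Ioi integrable_stdPhi.integrableOn
    integrable_stdPhi.integrableOn, integral_stdPhi]

lemma integral_Ioi_stdPhi (b : ℝ) : ∫ z in Ioi b, stdPhi z = stdPhiCdf (-b) := by
  calc ∫ z in Ioi b, stdPhi z = ∫ z in Ioi b, stdPhi (-z) := by simp only [stdPhi_neg]
    _ = stdPhiCdf (-b) := integral_comp_neg_Ioi b stdPhi

lemma stdPhiCdf_neg (x : ℝ) : stdPhiCdf (-x) = 1 - stdPhiCdf x := by
  linarith [stdPhiCdf_add_integral_Ioi x, integral_Ioi_stdPhi x]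

lemma abs_stdPhiCdf_le_one (x : ℝ) : |stdPhiCdf x| ≤ 1 := by
  have hnonneg (y : ℝ) : 0 ≤ stdPhiCdf y :=
    setIntegral_nonneg measurableSet_Iic fun z _ => stdPhi_nonneg z
  rw [abs_of_nonneg (hnonneg x)]
  linarith [stdPhiCdf_neg x, hnonneg (-x)]

lemma integrable_stdPhiCdf_comp_mul_stdPhi {h : ℝ → ℝ} (hh : Measurable h) :
    Integrable (fun u => stdPhiCdf (h u) * stdPhi u) :=
  integrable_stdPhi.bdd_mul (measurable_stdPhiCdf.comp hh).aestronglyMeasurable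
    (ae_of_all _ fun u => abs_stdPhiCdf_le_one (h u))

lemma integral_comp_sub_div {q : ℝ} (hq : 0 < q) (m : ℝ) (f : ℝ → ℝ) :
    ∫ t, q⁻¹ * f ((t - m) / q) = ∫ u, f u := by
  rw [integral_const_mul, integral_sub_right_eq_self (fun t => f (t / q)),
    Measure.integral_comp_div, abs_of_pos hq, smul_eq_mul, inv_mul_cancel_left₀ hq.ne']

lemma setIntegral_preimage_comp_sub_div {q : ℝ} (hq : 0 < q) (m : ℝ) (f : ℝ → ℝ) {S : Set ℝ}
    (hS : MeasurableSet S) :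
    ∫ t in (fun t => (t - m) / q) ⁻¹' S, q⁻¹ * f ((t - m) / q) = ∫ u in S, f u := by
  rw [← integral_indicator (hS.preimage (by fun_prop)), ← integral_indicator hS,
    ← integral_comp_sub_div hq m (S.indicator f)]
  congr 1 with t
  by_cases ht : (t - m) / q ∈ S <;> simp [indicator, ht]

lemma integral_Iic_comp_sub_div {q : ℝ} (hq : 0 < q) (m : ℝ) (f : ℝ → ℝ) (x : ℝ) :
    ∫ t in Iic x, q⁻¹ * f ((t - m) / q) = ∫ u in Iic ((x - m) / q), f u := by
  rw [← setIntegral_preimage_comp_sub_div hq m f measurableSet_Iic]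
  congr
  ext t
  simp [div_le_div_iff_of_pos_right hq]

lemma integral_Ioi_comp_sub_div {q : ℝ} (hq : 0 < q) (m : ℝ) (f : ℝ → ℝ) (x : ℝ) :
    ∫ t in Ioi x, q⁻¹ * f ((t - m) / q) = ∫ u in Ioi ((x - m) / q), f u := by
  rw [← setIntegral_preimage_comp_sub_div hq m f measurableSet_Ioi]
  congr
  ext t
  simp [div_lt_div_iff_of_pos_right hq]

lemma integrable_mul_comp_add_mul {f h : ℝ → ℝ} (hf : Integrable f) (hh : Integrable h)
    (k : ℝ) :
    Integrable (fun p : ℝ × ℝ => f p.1 * h (p.2 + k * p.1)) (volume.prod volume) := by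
  have hshear : MeasurePreserving (fun p : ℝ × ℝ => (p.1, p.2 + k * p.1))
      (volume.prod volume) (volume.prod volume) :=
    (MeasurePreserving.id volume).skew_product (g := fun a t : ℝ => t + k * a) (by fun_prop)
      (ae_of_all _ fun a => map_add_right_eq_self volume (k * a))
  exact (hshear.integrable_comp (hf.mul_prod hh).aestronglyMeasurable).2 (hf.mul_prod hh)

/-- For `k ^ 2 + s ^ 2 = 1`, writing `Φ((k z + b) / s)` as an integral over `u ≤ b` and rotating
`(z, u)` turns the `z`-integral into an expectation over an independent standard normal `v`,
with `z = s v - k u`. -/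
lemma integral_mul_stdPhiCdf_mul_stdPhi {k s : ℝ} (hs : 0 < s) (hks : k ^ 2 + s ^ 2 = 1)
    {g : ℝ → ℝ} (hg : Measurable g) {C : ℝ} (hgC : ∀ z, |g z| ≤ C) (b : ℝ) :
    ∫ z, g z * stdPhiCdf ((k * z + b) / s) * stdPhi z
      = ∫ u in Iic b, (∫ v, g (s * v - k * u) * stdPhi v) * stdPhi u := by
  set F : ℝ → ℝ → ℝ := fun z u => g z * (stdPhi z * (s⁻¹ * stdPhi ((u + k * z) / s))) with hF
  have hFint : Integrable (Function.uncurry F) (volume.prod (volume.restrict (Iic b))) := by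
    have hker := integrable_mul_comp_add_mul integrable_stdPhi
      ((integrable_stdPhi.comp_div hs.ne').const_mul s⁻¹) k
    exact (hker.bdd_mul (hg.comp measurable_fst).aestronglyMeasurable
      (ae_of_all _ fun p => hgC p.1)).mono_measure
        (Measure.prod_mono le_rfl Measure.restrict_le_self)
  have hcdf (z : ℝ) :
      stdPhiCdf ((k * z + b) / s) = ∫ u in Iic b, s⁻¹ * stdPhi ((u + k * z) / s) := by
    have := integral_Iic_comp_sub_div hs (-(k * z)) stdPhi b
    simp only [sub_neg_eq_add] at this
    rw [this, add_comm, stdPhiCdf]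
  calc ∫ z, g z * stdPhiCdf ((k * z + b) / s) * stdPhi z
      = ∫ z, ∫ u in Iic b, F z u := by
        congr 1 with z
        rw [hF, integral_const_mul, integral_const_mul, hcdf]
        ring
    _ = ∫ u in Iic b, ∫ z, F z u := integral_integral_swap hFint
    _ = ∫ u in Iic b, (∫ v, g (s * v - k * u) * stdPhi v) * stdPhi u := by
        congr 1 with u
        set G : ℝ → ℝ := fun v => g (s * v - k * u) * stdPhi v
        have hrot (z : ℝ) : F z u = stdPhi u * (s⁻¹ * G ((z - -(k * u)) / s)) := by
          have hsq : z ^ 2 + ((u + k * z) / s) ^ 2 = ((z - -(k * u)) / s) ^ 2 + u ^ 2 := by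
            field_simp
            linear_combination (z ^ 2 - u ^ 2) * hks
          have hz : s * ((z - -(k * u)) / s) - k * u = z := by field_simp; ring
          simp only [hF, G, hz]
          linear_combination g z * s⁻¹ * stdPhi_mul_stdPhi hsq
        simp_rw [hrot]
        rw [integral_const_mul, integral_comp_sub_div hs _ G, mul_comm]

lemma integral_stdPhiCdf_mul_stdPhi {k s : ℝ} (hs : 0 < s) (hks : k ^ 2 + s ^ 2 = 1) (b : ℝ) :
    ∫ z, stdPhiCdf ((k * z + b) / s) * stdPhi z = stdPhiCdf b := by
  have h := integral_mul_stdPhiCdf_mul_stdPhi hs hks measurable_const (fun _ => le_refl |1|) b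
  simpa [integral_stdPhi, stdPhiCdf] using h

lemma integral_stdPhiCdf_mul_add_mul_stdPhi (c m : ℝ) :
    ∫ v, stdPhiCdf (c * v + m) * stdPhi v = stdPhiCdf (m / √(1 + c ^ 2)) := by
  set q := √(1 + c ^ 2)
  have hq : 0 < q := Real.sqrt_pos.2 (by positivity)
  have hq2 : q ^ 2 = 1 + c ^ 2 := Real.sq_sqrt (by positivity)
  have hks : (c / q) ^ 2 + (1 / q) ^ 2 = 1 := by field_simp; linarith
  rw [← integral_stdPhiCdf_mul_stdPhi (one_div_pos.2 hq) hks]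
  congr with v
  field_simp

/-- `P(X ≤ x, Y ≤ y)` for a standard bivariate normal pair `(X, Y)` with correlation `ρ`,
obtained by conditioning on `Y = u`, given which `X ~ N(ρ u, 1 - ρ ^ 2)`. -/
noncomputable def stdBvnCdf (ρ x y : ℝ) : ℝ :=
  ∫ u in Iic y, stdPhiCdf ((x - ρ * u) / √(1 - ρ ^ 2)) * stdPhi u

lemma integral_stdPhiCdf_mul_stdPhiCdf_mul_stdPhi {a k s : ℝ} (hs : 0 < s)
    (has : a ^ 2 + s ^ 2 = 1) (hks : k ^ 2 + s ^ 2 = 1) (x y : ℝ) :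
    ∫ z, stdPhiCdf ((a * z + x) / s) * stdPhiCdf ((k * z + y) / s) * stdPhi z
      = stdBvnCdf (a * k) x y := by
  rw [integral_mul_stdPhiCdf_mul_stdPhi (g := fun z => stdPhiCdf ((a * z + x) / s)) hs hks
    (measurable_stdPhiCdf.comp (by fun_prop))
    (fun z => abs_stdPhiCdf_le_one _) y, stdBvnCdf]
  have hw : s * √(1 + a ^ 2) = √(1 - (a * k) ^ 2) := by
    rw [← Real.sqrt_sq hs.le, ← Real.sqrt_mul (sq_nonneg s)]
    congr 1
    linear_combination has + a ^ 2 * hks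
  congr 1 with u
  congr 1
  calc ∫ v, stdPhiCdf ((a * (s * v - k * u) + x) / s) * stdPhi v
      = ∫ v, stdPhiCdf (a * v + (x - a * k * u) / s) * stdPhi v := by
        congr 1 with v
        rw [show (a * (s * v - k * u) + x) / s = a * v + (x - a * k * u) / s by field_simp; ring]
    _ = stdPhiCdf ((x - a * k * u) / √(1 - (a * k) ^ 2)) := by
        rw [integral_stdPhiCdf_mul_add_mul_stdPhi, div_div, hw]

lemma integral_Ioi_stdPhiCdf_mul_stdPhi {ρ : ℝ} (hρ : ρ ^ 2 < 1) (x y : ℝ) :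
    ∫ u in Ioi (-y), stdPhiCdf ((ρ * u + x) / √(1 - ρ ^ 2)) * stdPhi u
      = 1 - stdPhiCdf (-x) - stdPhiCdf (-y) + stdBvnCdf ρ (-x) (-y) := by
  set w := √(1 - ρ ^ 2)
  have hw : 0 < w := Real.sqrt_pos.2 (by linarith)
  have hρw : (-ρ) ^ 2 + w ^ 2 = 1 := by rw [Real.sq_sqrt (by linarith)]; ring
  set Ψ : ℝ → ℝ := fun u => stdPhiCdf ((-x - ρ * u) / w) * stdPhi u
  have hΨ : Integrable Ψ := integrable_stdPhiCdf_comp_mul_stdPhi (by fun_prop)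
  have hΨ_total : ∫ u, Ψ u = stdPhiCdf (-x) := by
    rw [← integral_stdPhiCdf_mul_stdPhi hw hρw]
    congr 1 with u
    simp only [Ψ]
    congr 2
    ring
  calc ∫ u in Ioi (-y), stdPhiCdf ((ρ * u + x) / w) * stdPhi u
      = ∫ u in Ioi (-y), (stdPhi u - Ψ u) := by
        congr 1 with u
        rw [show (ρ * u + x) / w = -((-x - ρ * u) / w) by ring, stdPhiCdf_neg]
        ring
    _ = (∫ u in Ioi (-y), stdPhi u) - ((∫ u, Ψ u) - ∫ u in Iic (-y), Ψ u) := by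
        rw [integral_sub integrable_stdPhi.integrableOn hΨ.integrableOn,
          ← intervalIntegral.integral_Iic_add_Ioi hΨ.integrableOn hΨ.integrableOn]
        ring
    _ = 1 - stdPhiCdf (-x) - stdPhiCdf (-y) + stdBvnCdf ρ (-x) (-y) := by
        rw [integral_Ioi_stdPhi, neg_neg, hΨ_total, stdPhiCdf_neg y, stdBvnCdf]
        ring

lemma bvnDensity_eq_mul (μ1 μ2 σ1 σ2 : ℝ) {ρ : ℝ} (hρ : ρ ^ 2 < 1) (s1 s2 : ℝ) :
    bvnDensity μ1 μ2 σ1 σ2 ρ s1 s2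
      = σ2⁻¹ * stdPhi ((s2 - μ2) / σ2) * ((σ1 * √(1 - ρ ^ 2))⁻¹ *
          stdPhi ((s1 - (μ1 + ρ * σ1 * ((s2 - μ2) / σ2))) / (σ1 * √(1 - ρ ^ 2)))) := by
  have hw : 0 < √(1 - ρ ^ 2) := Real.sqrt_pos.2 (by linarith)
  have hw2 : √(1 - ρ ^ 2) ^ 2 = 1 - ρ ^ 2 := Real.sq_sqrt (by linarith)
  have hρ' : 1 - ρ ^ 2 ≠ 0 := by linarith
  have hnorm : (2 * π) ^ (-(1 / 2) : ℝ) * (2 * π) ^ (-(1 / 2) : ℝ) = (2 * π)⁻¹ := by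
    rw [← Real.rpow_add (by positivity), show -(1 / 2 : ℝ) + -(1 / 2) = -1 by norm_num,
      Real.rpow_neg_one]
  rw [bvnDensity, stdPhi, stdPhi,
    show ∀ c A B D : ℝ, σ2⁻¹ * (c * A) * (D * (c * B)) = (c * c) * (σ2⁻¹ * D) * (A * B) by
      intros; ring,
    hnorm, ← Real.exp_add]
  congr 1
  · field_simp
  · congr 1
    field_simp
    rw [hw2]
    ring

lemma integral_Ioi_Ioi_bvnDensity (μ1 μ2 : ℝ) {σ1 σ2 ρ : ℝ} (hσ1 : 0 < σ1) (hσ2 : 0 < σ2)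
    (hρ : ρ ^ 2 < 1) :
    ∫ s2 in Ioi (0 : ℝ), ∫ s1 in Ioi (0 : ℝ), bvnDensity μ1 μ2 σ1 σ2 ρ s1 s2
      = ∫ u in Ioi (-(μ2 / σ2)), stdPhiCdf ((ρ * u + μ1 / σ1) / √(1 - ρ ^ 2)) * stdPhi u := by
  set G : ℝ → ℝ := fun u => stdPhiCdf ((ρ * u + μ1 / σ1) / √(1 - ρ ^ 2)) * stdPhi u
  have hinner (s2 : ℝ) :
      ∫ s1 in Ioi (0 : ℝ), bvnDensity μ1 μ2 σ1 σ2 ρ s1 s2 = σ2⁻¹ * G ((s2 - μ2) / σ2) := by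
    simp only [bvnDensity_eq_mul μ1 μ2 σ1 σ2 hρ]
    rw [integral_const_mul, integral_Ioi_comp_sub_div (by positivity), integral_Ioi_stdPhi]
    simp only [G]
    rw [mul_assoc, mul_comm (stdPhiCdf _)]
    congr 3
    field_simp
    ring
  simp_rw [hinner]
  rw [integral_Ioi_comp_sub_div hσ2, zero_sub, neg_div]

lemma Real.sign_mul_abs (x : ℝ) : Real.sign x * |x| = x := by
  rcases lt_trichotomy x 0 with h | rfl | h
  · simp [Real.sign_of_neg h, abs_of_neg h]
  · simp
  · simp [Real.sign_of_pos h, abs_of_pos h]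

lemma Real.sign_sq_mul_abs (x : ℝ) : Real.sign x ^ 2 * |x| = |x| := by
  rcases lt_trichotomy x 0 with h | rfl | h
  · simp [Real.sign_of_neg h]
  · simp
  · simp [Real.sign_of_pos h]

theorem prob_first_quadrant_formula
    (μ1 μ2 σ1 σ2 ρ : ℝ) (hσ1 : 0 < σ1) (hσ2 : 0 < σ2) (hρ : ρ ∈ Set.Ioo (-1 : ℝ) 1) :
    (∫ s2 in Set.Ioi (0 : ℝ), ∫ s1 in Set.Ioi (0 : ℝ), bvnDensity μ1 μ2 σ1 σ2 ρ s1 s2) =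
      1 -
        (∫ z : ℝ, stdPhiCdf ((Real.sqrt |ρ| * z - μ1 / σ1) / Real.sqrt (1 - |ρ|)) *
          stdPhi z) -
        (∫ z : ℝ, stdPhiCdf ((Real.sign ρ * Real.sqrt |ρ| * z - μ2 / σ2) /
          Real.sqrt (1 - |ρ|)) * stdPhi z) +
        ∫ z : ℝ, stdPhiCdf ((Real.sqrt |ρ| * z - μ1 / σ1) / Real.sqrt (1 - |ρ|)) *
          stdPhiCdf ((Real.sign ρ * Real.sqrt |ρ| * z - μ2 / σ2) /
            Real.sqrt (1 - |ρ|)) * stdPhi z := by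
  have hρ_abs : |ρ| < 1 := abs_lt.2 hρ
  have hρ_sq : ρ ^ 2 < 1 := by rw [← sq_abs]; nlinarith [abs_nonneg ρ]
  set a := √|ρ|
  set k := Real.sign ρ * a
  set s := √(1 - |ρ|)
  have hs : 0 < s := Real.sqrt_pos.2 (by linarith)
  have has : a ^ 2 + s ^ 2 = 1 := by
    rw [Real.sq_sqrt (abs_nonneg ρ), Real.sq_sqrt (by linarith)]
    ring
  have hks : k ^ 2 + s ^ 2 = 1 := by
    rw [mul_pow, Real.sq_sqrt (abs_nonneg ρ), Real.sign_sq_mul_abs, ← has,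
      Real.sq_sqrt (abs_nonneg ρ)]
  have hak : a * k = ρ := by
    rw [mul_left_comm, ← sq, Real.sq_sqrt (abs_nonneg ρ), Real.sign_mul_abs]
  have h1 : ∫ z, stdPhiCdf ((a * z - μ1 / σ1) / s) * stdPhi z = stdPhiCdf (-(μ1 / σ1)) := by
    simpa only [sub_eq_add_neg] using integral_stdPhiCdf_mul_stdPhi hs has (-(μ1 / σ1))
  have h2 : ∫ z, stdPhiCdf ((k * z - μ2 / σ2) / s) * stdPhi z = stdPhiCdf (-(μ2 / σ2)) := by
    simpa only [sub_eq_add_neg] using integral_stdPhiCdf_mul_stdPhi hs hks (-(μ2 / σ2))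
  have h12 : ∫ z, stdPhiCdf ((a * z - μ1 / σ1) / s) * stdPhiCdf ((k * z - μ2 / σ2) / s) * stdPhi z
      = stdBvnCdf ρ (-(μ1 / σ1)) (-(μ2 / σ2)) := by
    simpa only [sub_eq_add_neg, hak] using
      integral_stdPhiCdf_mul_stdPhiCdf_mul_stdPhi hs has hks (-(μ1 / σ1)) (-(μ2 / σ2))
  rw [integral_Ioi_Ioi_bvnDensity μ1 μ2 hσ1 hσ2 hρ_sq, integral_Ioi_stdPhiCdf_mul_stdPhi hρ_sq,
    h1, h2, h12]
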